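/- arXiv:1709.07399 — 4 statements merged into one kernel-verified Lean document; each statement's English description precedes it below -/
import Mathlib

section
/- Let D be the incidence matrix of a cycle graph with m edges oriented consistently, and let X ∈ ℝ^m be a vector with at most k nonzero entries where k < m/2. Then X is the unique minimizer of ‖Z‖₁ over all Z ∈ ℝ^m satisfying D Z = D X. In particular, for every nonzero c ∈ ℝ, ‖X‖₁ < ‖X − c𝟙‖₁. -/
/-! The kernel of the cycle incidence matrix consists of the constant vectors, so every
competitor is `Z = X + c𝟙`. Shifting by `c ≠ 0` lowers each of the at most `k` nonzero
entries by at most `|c|` in absolute value but raises each of the `m - k > k`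
zero entries to exactly `|c|`. -/

open Finset Matrix

theorem sum_abs_lt_sum_abs_sub_const {ι : Type*} [Fintype ι] (X : ι → ℝ)
    (hsupp : 2 * #{i | X i ≠ 0} < Fintype.card ι) {c : ℝ} (hc : c ≠ 0) :
    ∑ i, |X i| < ∑ i, |X i - c| := by
  have hterm : ∀ i, |X i| + |c| * (if X i = 0 then 1 else -1) ≤ |X i - c| := by
    intro i
    split_ifs with hXi
    · simp [hXi, abs_neg]
    · linarith [abs_sub_abs_le_abs_sub (X i) c]
  have hcount : (0 : ℝ) < ∑ i, (if X i = 0 then 1 else -1 : ℝ) := by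
    rw [sum_ite, sum_const, sum_const, nsmul_eq_mul, nsmul_eq_mul]
    have hcard : #{i | X i ≠ 0} + 1 ≤ #{i | X i = 0} := by
      have : #{i | X i = 0} + #{i | X i ≠ 0} = Fintype.card ι :=
        card_filter_add_card_filter_not (s := univ) _
      omega
    have hcard' : (#{i | X i ≠ 0} : ℝ) + 1 ≤ #{i | X i = 0} := by exact_mod_cast hcard
    linarith
  calc ∑ i, |X i|
      < ∑ i, |X i| + |c| * ∑ i, (if X i = 0 then 1 else -1 : ℝ) := by
        have := abs_pos.mpr hc
        nlinarith
    _ = ∑ i, (|X i| + |c| * (if X i = 0 then 1 else -1)) := by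
        rw [sum_add_distrib, mul_sum]
    _ ≤ ∑ i, |X i - c| := sum_le_sum fun i _ => hterm i

section CycleIncidence

variable {m : ℕ} {D : Matrix (Fin m) (Fin m) ℝ}

theorem cycleIncidence_mulVec_succ (hD : ∀ i j, D i j =
      if (i : ℕ) = (j : ℕ) then 1 else if (i : ℕ) = ((j : ℕ) + 1) % m then -1 else 0)
    (v : Fin m → ℝ) (n : ℕ) (hn : n + 1 < m) :
    (D *ᵥ v) ⟨n + 1, hn⟩ = v ⟨n + 1, hn⟩ - v ⟨n, by omega⟩ := by
  have hrow : ∀ j : Fin m, D ⟨n + 1, hn⟩ j =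
      (if j = ⟨n + 1, hn⟩ then 1 else 0) - (if j = ⟨n, by omega⟩ then 1 else 0) := by
    intro j
    have hwrap : n + 1 = ((j : ℕ) + 1) % m ↔ (j : ℕ) = n := by
      rcases Nat.lt_or_ge ((j : ℕ) + 1) m with hj | hj
      · rw [Nat.mod_eq_of_lt hj]; omega
      · rw [show (j : ℕ) + 1 = m by omega, Nat.mod_self]; omega
    simp only [hD, Fin.ext_iff, hwrap]
    split_ifs <;> first | omega | norm_num
  simp only [mulVec, dotProduct, hrow, sub_mul, ite_mul, one_mul, zero_mul,
    sum_sub_distrib, sum_ite_eq', mem_univ, if_true]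

theorem eq_const_of_cycleIncidence_mulVec_eq_zero (hD : ∀ i j, D i j =
      if (i : ℕ) = (j : ℕ) then 1 else if (i : ℕ) = ((j : ℕ) + 1) % m then -1 else 0)
    {v : Fin m → ℝ} (hv : D *ᵥ v = 0) : ∃ c, ∀ i, v i = c := by
  rcases Nat.eq_zero_or_pos m with rfl | hm
  · exact ⟨0, fun i => i.elim0⟩
  have hstep : ∀ n (hn : n < m), v ⟨n, hn⟩ = v ⟨0, hm⟩ := by
    intro n
    induction n with
    | zero => exact fun _ => rfl
    | succ n ih =>
      intro hn
      have := cycleIncidence_mulVec_succ hD v n hn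
      rw [hv, Pi.zero_apply] at this
      linarith [ih (by omega)]
  exact ⟨v ⟨0, hm⟩, fun i => hstep i i.isLt⟩

end CycleIncidence

theorem cycle_l1_unique_minimizer_general {m : ℕ}
    (D : Matrix (Fin m) (Fin m) ℝ)
    (hD : ∀ i j, D i j =
      if (i : ℕ) = (j : ℕ) then 1 else if (i : ℕ) = ((j : ℕ) + 1) % m then -1 else 0)
    (X : Fin m → ℝ)
    (hsupp : 2 * (Finset.univ.filter fun i => X i ≠ 0).card < m) :
    (∀ Z : Fin m → ℝ, D.mulVec Z = D.mulVec X → Z ≠ X →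
      ∑ i, |X i| < ∑ i, |Z i|) ∧
    (∀ c : ℝ, c ≠ 0 → ∑ i, |X i| < ∑ i, |X i - c|) := by
  replace hsupp : 2 * #{i | X i ≠ 0} < Fintype.card (Fin m) := by rwa [Fintype.card_fin]
  refine ⟨fun Z hDZ hZX => ?_, fun c hc => sum_abs_lt_sum_abs_sub_const X hsupp hc⟩
  obtain ⟨c, hc⟩ := eq_const_of_cycleIncidence_mulVec_eq_zero hD (v := Z - X) (by
    rw [mulVec_sub, hDZ, sub_self])
  have hc0 : -c ≠ 0 := by
    refine neg_ne_zero.mpr fun h => hZX (funext fun i => ?_)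
    linarith [hc i, Pi.sub_apply Z X i]
  calc ∑ i, |X i| < ∑ i, |X i - -c| := sum_abs_lt_sum_abs_sub_const X hsupp hc0
    _ = ∑ i, |Z i| := sum_congr rfl fun i _ => by
        rw [← hc i, Pi.sub_apply, sub_neg_eq_add, add_sub_cancel]

/-- For the incidence matrix of a consistently oriented cycle with `m` edges and a
vector `X` with fewer than `m/2` nonzero entries, `X` is the unique ℓ¹ minimizer
among all `Z` with `D Z = D X`; in particular `‖X‖₁ < ‖X − c𝟙‖₁` for all `c ≠ 0`. -/
theorem cycle_l1_unique_minimizer {m : ℕ} (hm : 3 ≤ m)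
    (D : Matrix (Fin m) (Fin m) ℝ)
    (hD : ∀ i j, D i j =
      if (i : ℕ) = (j : ℕ) then 1 else if (i : ℕ) = ((j : ℕ) + 1) % m then -1 else 0)
    (X : Fin m → ℝ)
    (hsupp : 2 * (Finset.univ.filter fun i => X i ≠ 0).card < m) :
    (∀ Z : Fin m → ℝ, D.mulVec Z = D.mulVec X → Z ≠ X →
      ∑ i, |X i| < ∑ i, |Z i|) ∧
    (∀ c : ℝ, c ≠ 0 → ∑ i, |X i| < ∑ i, |X i - c|) :=
  cycle_l1_unique_minimizer_general D hD X hsupp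
end

section
/- Let G be a bipartite-style setting with vertex sets H̄ and H, and suppose there exists a matching M between H̄ and H covering all nodes of H, where each matched pair (u_i, v_i) corresponds to a nonzero entry position of the submatrix Y_{H̄|H}. If the nonzero entries of Y_{H̄|H} (both real parts G_{uv} and imaginary parts B_{uv}) are drawn from a continuous (absolutely continuous) joint distribution, then the block matrix M = [[G_{H̄|H}, −B_{H̄|H}], [B_{H̄|H}, G_{H̄|H}]] has full column rank 2|H| almost surely. -/
/-!
The polynomial `det (Mᵀ M)` in the free entries of `G` and `B` does not vanish identically: at the
point where `G` is the 0/1 matrix of the matching and `B = 0`, the columns of `M` are distinct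
standard basis vectors, so `Mᵀ M = 1`. Since `det (Mᵀ M) ≠ 0` forces full column rank, it remains to
see that a nonzero real polynomial vanishes only on a Lebesgue-null set. By Fubini this follows by
induction on the number of variables: outside the null zero set of the leading coefficient in the
last variable, each fibre of the zero set is finite.
-/

open MeasureTheory Matrix

theorem measurePreserving_fin_cons_swap (n : ℕ) :
    MeasurePreserving (fun sy : (Fin n → ℝ) × ℝ => (Fin.cons sy.2 sy.1 : Fin (n + 1) → ℝ)) := by
  convert (volume_preserving_piFinSuccAbove (fun _ : Fin (n + 1) => ℝ) 0).symm.comp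
    Measure.measurePreserving_swap using 1
  · ext sy : 1
    simp [Fin.consEquiv]
  · rfl

theorem Matrix.rank_eq_card_of_det_transpose_mul_self_ne_zero {m n R : Type*} [Fintype m]
    [Fintype n] [DecidableEq n] [Field R] [LinearOrder R] [IsStrictOrderedRing R]
    {A : Matrix m n R} (h : (Aᵀ * A).det ≠ 0) : A.rank = Fintype.card n := by
  rw [← rank_transpose_mul_self, rank_of_det_ne_zero h]

namespace MvPolynomial

theorem finite_setOf_eval_cons_eq_zero {R : Type*} [CommRing R] [IsDomain R] {n : ℕ}
    {p : MvPolynomial (Fin (n + 1)) R} {s : Fin n → R}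
    (hs : eval s (finSuccEquiv R n p).leadingCoeff ≠ 0) :
    {y : R | eval (Fin.cons y s) p = 0}.Finite := by
  have hne : (finSuccEquiv R n p).map (eval s) ≠ 0 := by
    intro h
    apply hs
    simpa [h] using ((finSuccEquiv R n p).coeff_map (eval s) (finSuccEquiv R n p).natDegree).symm
  simpa only [eval_eq_eval_mv_eval', Polynomial.IsRoot.def] using
    Polynomial.finite_setOfPred_isRoot hne

theorem ae_eval_ne_zero_fin :
    ∀ {n : ℕ} {p : MvPolynomial (Fin n) ℝ}, p ≠ 0 → ∀ᵐ x, eval x p ≠ 0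
  | 0, p, hp => by
    obtain ⟨a, rfl⟩ := C_surjective (Fin 0) p
    simp_all
  | n + 1, p, hp => by
    have hlc : (finSuccEquiv ℝ n p).leadingCoeff ≠ 0 := by simpa using hp
    have hS : MeasurableSet {x : Fin (n + 1) → ℝ | eval x p = 0} :=
      (isClosed_eq (continuous_eval p) continuous_const).measurableSet
    simp only [ae_iff, ne_eq, not_not]
    rw [← (measurePreserving_fin_cons_swap n).measure_preimage hS.nullMeasurableSet]
    refine (Measure.measure_prod_null ((measurePreserving_fin_cons_swap n).measurable hS)).2 ?_
    filter_upwards [ae_eval_ne_zero_fin hlc] with s hs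
    exact (finite_setOf_eval_cons_eq_zero hs).measure_zero _

theorem ae_eval_ne_zero {σ : Type*} [Fintype σ] {p : MvPolynomial σ ℝ} (hp : p ≠ 0) :
    ∀ᵐ x, eval x p ≠ 0 := by
  obtain ⟨n, ⟨e⟩⟩ := Finite.exists_equiv_fin σ
  have hrename : rename e p ≠ 0 := (rename_injective e e.injective).ne_iff.2 hp
  filter_upwards [(volume_measurePreserving_piCongrLeft (fun _ : Fin n => ℝ) e)
    |>.quasiMeasurePreserving.ae (ae_eval_ne_zero_fin hrename)] with x hx
  simpa [eval_rename, Function.comp_def, MeasurableEquiv.piCongrLeft_apply_apply] using hx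

theorem ae_rank_map_eval_eq_card {σ m n : Type*} [Fintype σ] [Fintype m] [Fintype n]
    [DecidableEq n] (N : Matrix m n (MvPolynomial σ ℝ)) (x₀ : σ → ℝ)
    (h₀ : ((N.map (eval x₀))ᵀ * N.map (eval x₀)).det ≠ 0) :
    ∀ᵐ x, (N.map (eval x)).rank = Fintype.card n := by
  have heval : ∀ x, eval x (Nᵀ * N).det = ((N.map (eval x))ᵀ * N.map (eval x)).det := fun x => by
    rw [RingHom.map_det, RingHom.mapMatrix_apply, Matrix.map_mul, Matrix.transpose_map]
  have hdet : (Nᵀ * N).det ≠ 0 := fun h => h₀ (by rw [← heval, h, map_zero])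
  filter_upwards [ae_eval_ne_zero hdet] with x hx
  exact rank_eq_card_of_det_transpose_mul_self_ne_zero (heval x ▸ hx)

end MvPolynomial

namespace Matrix

variable {m n R S : Type*}

def supportedMatrix [Zero R] (Adj : m → n → Prop) [∀ u v, Decidable (Adj u v)] (g : m × n → R) :
    Matrix m n R :=
  of fun u v => if Adj u v then g (u, v) else 0

/-- The real form of the complex matrix `G + iB`. -/
def realBlock [Neg R] (G B : Matrix m n R) : Matrix (m ⊕ m) (n ⊕ n) R :=
  fromBlocks G (-B) B G

section

variable (Adj : m → n → Prop) [∀ u v, Decidable (Adj u v)]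

theorem supportedMatrix_map [Zero R] [Zero S] (φ : R → S) (hφ : φ 0 = 0) (g : m × n → R) :
    (supportedMatrix Adj g).map φ = supportedMatrix Adj (φ ∘ g) := by
  ext u v
  simp [supportedMatrix, apply_ite φ, hφ]

theorem supportedMatrix_eq_submatrix_one [DecidableEq m] [Zero R] [One R] {f : n → m}
    (hfm : ∀ v, Adj (f v) v) :
    supportedMatrix Adj (fun uv => if uv.1 = f uv.2 then (1 : R) else 0) =
      (1 : Matrix m m R).submatrix id f := by
  ext u v
  by_cases h : u = f v
  · subst h
    simp [supportedMatrix, hfm v, one_apply]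
  · simp [supportedMatrix, h]

end

theorem transpose_mul_self_submatrix_one [Fintype m] [DecidableEq m] [DecidableEq n]
    [NonAssocSemiring R] {f : n → m} (hf : Function.Injective f) :
    ((1 : Matrix m m R).submatrix id f)ᵀ * (1 : Matrix m m R).submatrix id f = 1 := by
  ext v w
  simp [mul_apply, one_apply, hf.eq_iff]

theorem realBlock_map [Ring R] [Ring S] (φ : R →+* S) (G B : Matrix m n R) :
    (realBlock G B).map φ = realBlock (G.map φ) (B.map φ) := by
  simp [realBlock, fromBlocks_map, Matrix.map_neg]

theorem realBlock_one_zero [DecidableEq n] [AddGroupWithOne R] :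
    realBlock (1 : Matrix n n R) 0 = 1 := by
  rw [realBlock, neg_zero, fromBlocks_one]

theorem transpose_realBlock_zero_mul_self [Fintype m] [Ring R] (G : Matrix m n R) :
    (realBlock G 0)ᵀ * realBlock G 0 = realBlock (Gᵀ * G) 0 := by
  simp [realBlock, fromBlocks_transpose, fromBlocks_multiply]

end Matrix

open Matrix MvPolynomial in
theorem block_matrix_full_rank_almost_surely_general
    {A Bt : Type*} [Fintype A] [Fintype Bt]
    (Adj : A → Bt → Prop) [∀ u v, Decidable (Adj u v)]
    (f : Bt → A) (hf : Function.Injective f) (hfm : ∀ v, Adj (f v) v) :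
    MeasureTheory.volume {p : ((A × Bt) → ℝ) × ((A × Bt) → ℝ) |
      (Matrix.fromBlocks
        (Matrix.of fun u v => if Adj u v then p.1 (u, v) else 0)
        (-(Matrix.of fun u v => if Adj u v then p.2 (u, v) else 0))
        (Matrix.of fun u v => if Adj u v then p.2 (u, v) else 0)
        (Matrix.of fun u v => if Adj u v then p.1 (u, v) else 0)).rank
        ≠ 2 * Fintype.card Bt} = 0 := by
  classical
  let N : Matrix (A ⊕ A) (Bt ⊕ Bt) (MvPolynomial ((A × Bt) ⊕ (A × Bt)) ℝ) :=
    realBlock (supportedMatrix Adj (X ∘ Sum.inl)) (supportedMatrix Adj (X ∘ Sum.inr))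
  have hN : ∀ q, N.map (eval q) =
      realBlock (supportedMatrix Adj (q ∘ Sum.inl)) (supportedMatrix Adj (q ∘ Sum.inr)) := by
    intro q
    simp only [N, realBlock_map, supportedMatrix_map _ _ (map_zero _), Function.comp_def, eval_X]
  let x₀ : (A × Bt) ⊕ (A × Bt) → ℝ := Sum.elim (fun uv => if uv.1 = f uv.2 then 1 else 0) 0
  have h₀ : ((N.map (eval x₀))ᵀ * N.map (eval x₀)).det ≠ 0 := by
    have hB₀ : supportedMatrix Adj (x₀ ∘ Sum.inr) = 0 := by ext; simp [supportedMatrix, x₀]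
    rw [hN, hB₀, transpose_realBlock_zero_mul_self,
      show x₀ ∘ Sum.inl = fun uv => if uv.1 = f uv.2 then 1 else 0 from rfl,
      supportedMatrix_eq_submatrix_one Adj hfm, transpose_mul_self_submatrix_one hf,
      realBlock_one_zero, det_one]
    exact one_ne_zero
  have hrank := (volume_measurePreserving_sumPiEquivProdPi_symm fun _ => ℝ)
    |>.quasiMeasurePreserving.ae (ae_rank_map_eval_eq_card N x₀ h₀)
  simp only [hN, Fintype.card_sum, ← two_mul] at hrank
  exact ae_iff.1 hrank

/-- If there is a matching between `H̄` (rows) and `H` (columns) covering all of `H`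
(given by an injection `f` from columns to rows with `Adj (f v) v`), and the entries
of `G` and `B` at adjacent positions are free real parameters (zero elsewhere), then
the set of parameter values for which the block matrix `[[G,−B],[B,G]]` fails to
have full column rank `2|H|` has Lebesgue measure zero (i.e., full rank holds
almost surely for absolutely continuous entry distributions). -/
theorem block_matrix_full_rank_almost_surely
    {A Bt : Type*} [Fintype A] [Fintype Bt] [DecidableEq A] [DecidableEq Bt]
    (Adj : A → Bt → Prop) [∀ u v, Decidable (Adj u v)]
    (f : Bt → A) (hf : Function.Injective f) (hfm : ∀ v, Adj (f v) v) :
    MeasureTheory.volume {p : ((A × Bt) → ℝ) × ((A × Bt) → ℝ) |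
      (Matrix.fromBlocks
        (Matrix.of fun u v => if Adj u v then p.1 (u, v) else 0)
        (-(Matrix.of fun u v => if Adj u v then p.2 (u, v) else 0))
        (Matrix.of fun u v => if Adj u v then p.2 (u, v) else 0)
        (Matrix.of fun u v => if Adj u v then p.1 (u, v) else 0)).rank
        ≠ 2 * Fintype.card Bt} = 0 :=
  block_matrix_full_rank_almost_surely_general Adj f hf hfm
end

section
/- Suppose Y' = Y − D diag(y_F) Dᵀ where y_F is supported on the failed line set F ⊆ ℒ_H with ℒ_H the lines of subgraph H, and let V' satisfy Y'V' = I'. Then the vector X := diag(y_F) D_Hᵀ V' ∈ ℂ^{|ℒ_H|} (restricted to columns of lines in ℒ_H) satisfies Y_H V' = I'_H + D_H X, and supp(X) ⊆ F. Moreover, if D_H has full column rank, X is the unique solution of this linear equation. -/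
/-- If `Y' = Y − D diag(y_F) Dᵀ` with `y_F` supported on failed lines `F ⊆ ℒ_H`,
and `Y' V' = I'`, then `X := diag(y_F) D_Hᵀ V'` satisfies `Y_H V' = I'_H + D_H X`
with `supp(X) ⊆ F`; moreover if `D_H` has full column rank the solution `X` of
this linear equation is unique. -/
theorem line_failure_equation {N E : Type*} [Fintype N] [Fintype E]
    [DecidableEq N] [DecidableEq E]
    (D : Matrix N E ℂ) (Y Y' : Matrix N N ℂ)
    (Hn : Finset N) (HE F : Finset E) (hFH : F ⊆ HE)
    (yF : E → ℂ) (hyF : ∀ e, yF e ≠ 0 → e ∈ F)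
    (hcol : ∀ e ∈ HE, ∀ i, D i e ≠ 0 → i ∈ Hn)
    (hY' : Y' = Y - D * Matrix.diagonal yF * D.transpose)
    (V' I' : N → ℂ) (hVI : Y'.mulVec V' = I')
    (X : E → ℂ) (hX : ∀ e, X e = yF e * ∑ i, D i e * V' i) :
    (∀ i ∈ Hn, Y.mulVec V' i = I' i + ∑ e ∈ HE, D i e * X e) ∧
    (∀ e, X e ≠ 0 → e ∈ F) ∧
    (LinearIndependent ℂ (fun e : HE => fun i : Hn => D (i : N) (e : E)) →
      ∀ X₁ X₂ : E → ℂ,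
        (∀ e, X₁ e ≠ 0 → e ∈ HE) → (∀ e, X₂ e ≠ 0 → e ∈ HE) →
        (∀ i ∈ Hn, Y.mulVec V' i = I' i + ∑ e ∈ HE, D i e * X₁ e) →
        (∀ i ∈ Hn, Y.mulVec V' i = I' i + ∑ e ∈ HE, D i e * X₂ e) →
        X₁ = X₂) := by
  have hsupp : ∀ e, X e ≠ 0 → e ∈ F := by
    intro e he
    apply hyF
    intro h0
    exact he (by rw [hX e, h0, zero_mul])
  refine ⟨?_, hsupp, ?_⟩
  · intro i hi
    have key : (D * Matrix.diagonal yF * D.transpose).mulVec V' i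
        = ∑ e ∈ HE, D i e * X e := by
      have h1 : (D * Matrix.diagonal yF * D.transpose).mulVec V'
          = D.mulVec ((Matrix.diagonal yF).mulVec (D.transpose.mulVec V')) := by
        rw [Matrix.mulVec_mulVec, Matrix.mulVec_mulVec]
      have h2 : (Matrix.diagonal yF).mulVec (D.transpose.mulVec V') = X := by
        funext e
        rw [Matrix.mulVec_diagonal, hX e]
        simp [Matrix.mulVec, dotProduct, Matrix.transpose_apply]
      rw [h1, h2]
      have h3 : D.mulVec X i = ∑ e, D i e * X e := by
        simp [Matrix.mulVec, dotProduct]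
      rw [h3]
      refine (Finset.sum_subset (Finset.subset_univ _) ?_).symm
      intro e _ heH
      have : X e = 0 := by
        by_contra h
        exact heH (hFH (hsupp e h))
      rw [this, mul_zero]
    have := congrFun hVI i
    rw [hY', Matrix.sub_mulVec] at this
    simp only [Pi.sub_apply] at this
    rw [key] at this
    linear_combination this
  · intro hli X₁ X₂ h1 h2 e1 e2
    have hz : ∀ i ∈ Hn, ∑ e ∈ HE, D i e * (X₁ e - X₂ e) = 0 := by
      intro i hi
      have := (e1 i hi).symm.trans (e2 i hi)
      simp only [mul_sub]
      rw [Finset.sum_sub_distrib]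
      linear_combination this
    have key := Fintype.linearIndependent_iff.mp hli
      (fun e : HE => X₁ (e : E) - X₂ (e : E)) ?_
    · funext e
      by_cases heH : e ∈ HE
      · have := key ⟨e, heH⟩
        have h0 : X₁ e - X₂ e = 0 := this
        linear_combination h0
      · have h1' : X₁ e = 0 := by by_contra h; exact heH (h1 e h)
        have h2' : X₂ e = 0 := by by_contra h; exact heH (h2 e h)
        rw [h1', h2']
    · funext i
      have hi : (i : N) ∈ Hn := i.2
      have := hz i hi
      calc (∑ e : HE, (X₁ (e : E) - X₂ (e : E)) • fun j : Hn => D (j : N) (e : E)) i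
          = ∑ e : HE, (X₁ (e : E) - X₂ (e : E)) * D (i : N) (e : E) := by
            simp [Finset.sum_apply]
        _ = ∑ e ∈ HE, D (i : N) e * (X₁ e - X₂ e) := by
            rw [← Finset.sum_attach HE (fun e => D (i : N) e * (X₁ e - X₂ e))]
            exact Finset.sum_congr rfl (fun e _ => mul_comm _ _)
        _ = 0 := this
end

section
/- Let D_H be the incidence matrix of a connected graph H that is a single cycle with m edges, oriented consistently, and fix b = D_H X₀ for some X₀ ∈ ℝ^m with |supp(X₀)| < m/2. Then X₀ is the unique solution of the linear program: minimize ‖X‖₁ subject to D_H X = b. -/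
/-- For the incidence matrix of a consistently oriented cycle with `m` edges and
`X₀` with fewer than `m/2` nonzero entries, `X₀` is the unique solution of the
linear program `min ‖X‖₁ s.t. D X = D X₀`. -/
theorem cycle_lp_unique_solution {m : ℕ} (hm : 3 ≤ m)
    (D : Matrix (Fin m) (Fin m) ℝ)
    (hD : ∀ i j, D i j =
      if (i : ℕ) = (j : ℕ) then 1 else if (i : ℕ) = ((j : ℕ) + 1) % m then -1 else 0)
    (X₀ : Fin m → ℝ)
    (hsupp : 2 * (Finset.univ.filter fun i => X₀ i ≠ 0).card < m)
    (b : Fin m → ℝ) (hb : b = D.mulVec X₀) :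
    ∀ X : Fin m → ℝ, D.mulVec X = b → X ≠ X₀ → ∑ i, |X₀ i| < ∑ i, |X i| := by
  subst hb
  intro X hX hne
  haveI : NeZero m := ⟨by omega⟩
  have hone : ((1 : Fin m) : ℕ) = 1 := by
    have : ((1 : Fin m) : ℕ) = 1 % m := Fin.val_one' m
    rw [this, Nat.mod_eq_of_lt (by omega)]
  have hne10 : (1 : Fin m) ≠ 0 := by
    intro h
    have h2 := congrArg Fin.val h
    rw [hone] at h2
    exact one_ne_zero h2
  -- row formula
  have hrow : ∀ (v : Fin m → ℝ) (i : Fin m), D.mulVec v i = v i - v (i - 1) := by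
    intro v i
    have hD' : ∀ j : Fin m, D i j = (if j = i then (1:ℝ) else 0) + (if j = i - 1 then -1 else 0) := by
      intro j
      rw [hD]
      have hcond : ((i:ℕ) = ((j:ℕ)+1) % m) ↔ j = i - 1 := by
        have hval : ((j + 1 : Fin m) : ℕ) = ((j:ℕ)+1) % m := by
          rw [Fin.val_add, hone]
        constructor
        · intro h
          have : i = j + 1 := Fin.ext (by rw [hval]; exact h)
          rw [this]; abel
        · intro h
          have : i = j + 1 := by rw [h]; abel
          rw [this, hval]
      have hii : i ≠ i - 1 := by
        intro h
        have h2 : i = i + 1 := sub_eq_iff_eq_add.mp h.symm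
        nth_rewrite 1 [← add_zero i] at h2
        exact hne10 (add_left_cancel h2).symm
      have hc1 : ((i:ℕ) = (j:ℕ)) ↔ j = i := by
        rw [Fin.ext_iff]; exact eq_comm
      simp only [hc1, hcond]
      split_ifs with ha hb hb
      · exact absurd (ha.symm.trans hb) hii
      · ring
      · ring
      · ring
    simp only [Matrix.mulVec, dotProduct]
    have key : ∀ j : Fin m, D i j * v j =
        (if j = i then v j else 0) + (if j = i - 1 then -v j else 0) := by
      intro j
      rw [hD']
      split_ifs <;> ring
    rw [Finset.sum_congr rfl (fun j _ => key j), Finset.sum_add_distrib]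
    simp
    ring
  -- constant difference
  have hY : ∀ i : Fin m, X i - X₀ i = X (i - 1) - X₀ (i - 1) := by
    intro i
    have h1 := congrFun hX i
    rw [hrow X i, hrow X₀ i] at h1
    linarith
  have hconst : ∀ i : Fin m, X i - X₀ i = X 0 - X₀ 0 := by
    intro i
    obtain ⟨n, hn⟩ := i
    induction n with
    | zero => rfl
    | succ n ih =>
      have hn' : n < m := by omega
      have hstep : (⟨n+1, hn⟩ : Fin m) - 1 = ⟨n, hn'⟩ := by
        have : (⟨n, hn'⟩ : Fin m) + 1 = ⟨n+1, hn⟩ := by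
          apply Fin.ext
          rw [Fin.val_add, hone]
          exact Nat.mod_eq_of_lt hn
        rw [← this]; abel
      have := hY ⟨n+1, hn⟩
      rw [hstep] at this
      rw [this, ih hn']
  set c := X 0 - X₀ 0 with hc
  have hcne : c ≠ 0 := by
    intro h
    apply hne
    funext i
    have := hconst i
    rw [h] at this
    linarith
  have hXe : ∀ i, X i = X₀ i + c := by
    intro i
    have := hconst i
    linarith
  -- final inequality
  set S := Finset.univ.filter (fun i => X₀ i ≠ 0) with hS
  set T := Finset.univ.filter (fun i => ¬ X₀ i ≠ 0) with hT
  have hsplit : ∀ f : Fin m → ℝ, ∑ i, f i = ∑ i ∈ S, f i + ∑ i ∈ T, f i := by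
    intro f
    rw [hS, hT, Finset.sum_filter_add_sum_filter_not]
  have hcard : S.card + T.card = m := by
    rw [hS, hT, Finset.card_filter_add_card_filter_not]
    simp
  have hT0 : ∀ i ∈ T, X₀ i = 0 := by
    intro i hi
    rw [hT] at hi
    simpa using hi
  have h1 : ∑ i, |X₀ i| = ∑ i ∈ S, |X₀ i| := by
    rw [hsplit]
    have : ∑ i ∈ T, |X₀ i| = 0 := Finset.sum_eq_zero (fun i hi => by rw [hT0 i hi]; simp)
    rw [this, add_zero]
  have h2 : ∑ i, |X i| = ∑ i ∈ S, |X₀ i + c| + T.card * |c| := by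
    rw [hsplit]
    congr 1
    · exact Finset.sum_congr rfl (fun i _ => by rw [hXe i])
    · rw [Finset.sum_congr rfl (fun i hi => by rw [hXe i, hT0 i hi, zero_add]),
        Finset.sum_const, nsmul_eq_mul]
  have h3 : ∑ i ∈ S, |X₀ i| - S.card * |c| ≤ ∑ i ∈ S, |X₀ i + c| := by
    have : ∀ i ∈ S, |X₀ i| - |c| ≤ |X₀ i + c| := by
      intro i _
      have := abs_add_le (X₀ i + c) (-c)
      simp at this
      linarith
    calc ∑ i ∈ S, |X₀ i| - S.card * |c| = ∑ i ∈ S, (|X₀ i| - |c|) := by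
          rw [Finset.sum_sub_distrib, Finset.sum_const, nsmul_eq_mul]
      _ ≤ ∑ i ∈ S, |X₀ i + c| := Finset.sum_le_sum this
  have hck : (S.card : ℝ) + 1 ≤ (T.card : ℝ) := by
    have : S.card + 1 ≤ T.card := by omega
    exact_mod_cast this
  have habs : 0 < |c| := abs_pos.mpr hcne
  rw [h1, h2]
  nlinarith [h3, hck, habs]
end
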